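/- arXiv:1301.3179 — 2 statements merged into one kernel-verified Lean document; each statement's English description precedes it below -/
import Mathlib

section
/- Let T be an ergodic, measure-preserving transformation of a probability space (X, m), let S = {0, 1} be a two-state space, and let f_0, f_1 : X → S be measurable transition functions such that m({x ∈ X : f_i(x) = i}) < 1 for each i ∈ S. Then the deterministic walk is transitive on S, i.e. for all i, j ∈ S, m({x ∈ X : U_{i,n}(x) = j for some n ≥ 1}) = 1. -/
open MeasureTheory Set Filter

/-- The skew product `T_f (x, i) = (T x, f_i x)` driving a deterministic walk. -/
def detSkew {X S : Type*} (T : X → X) (f : S → X → S) : X × S → X × S :=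
  fun p => (T p.1, f p.2 p.1)

/-- The deterministic walk `U_{i,n}(x) = π₂ (T_f^n (x, i))`. -/
def detWalk {X S : Type*} (T : X → X) (f : S → X → S) (i : S) (n : ℕ) (x : X) : S :=
  ((detSkew T f)^[n] (x, i)).2

/-- The deterministic walk is transitive on `S` if for all `i j`, a.e. point
visits `j` at some positive time when started from `i`. -/
def WalkTransitive {X S : Type*} [MeasurableSpace X] (m : Measure X)
    (T : X → X) (f : S → X → S) : Prop :=
  ∀ i j : S, m {x | ∃ n, 1 ≤ n ∧ detWalk T f i n x = j} = 1

/-- A (non-singular) Markov transformation with Markov partition `P`. -/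
structure IsMarkovMap {Y : Type*} [MeasurableSpace Y] (μ : Measure Y) (R : Y → Y)
    (P : Set (Set Y)) : Prop where
  nonsingular : ∀ A : Set Y, MeasurableSet A → μ A = 0 → μ (R ⁻¹' A) = 0
  measurableSet : ∀ a ∈ P, MeasurableSet a
  pairwiseDisjoint : P.PairwiseDisjoint id
  sUnion_eq : ⋃₀ P = Set.univ
  image_sUnion : ∀ a ∈ P, ∃ Q ⊆ P, R '' a = ⋃₀ Q
  injOn : ∀ a ∈ P, Set.InjOn R a

/-- `a` communicates with `b`: a positive measure set of points of `a` visits `b`. -/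
def Communicates {Y : Type*} [MeasurableSpace Y] (μ : Measure Y) (R : Y → Y)
    (a b : Set Y) : Prop :=
  0 < μ {x | x ∈ a ∧ ∃ n, 1 ≤ n ∧ R^[n] x ∈ b}

/-- The communication class of `a` in the partition `P`. -/
def commClass {Y : Type*} [MeasurableSpace Y] (μ : Measure Y) (R : Y → Y)
    (P : Set (Set Y)) (a : Set Y) : Set (Set Y) :=
  {b ∈ P | Communicates μ R a b ∧ Communicates μ R b a}

/-- `C` is a communication class of the partition `P`. -/
def IsCommClass {Y : Type*} [MeasurableSpace Y] (μ : Measure Y) (R : Y → Y)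
    (P : Set (Set Y)) (C : Set (Set Y)) : Prop :=
  ∃ a ∈ P, C = commClass μ R P a

/-- `C` is a closed communication class of the partition `P`. -/
def IsClosedCommClass {Y : Type*} [MeasurableSpace Y] (μ : Measure Y) (R : Y → Y)
    (P : Set (Set Y)) (C : Set (Set Y)) : Prop :=
  IsCommClass μ R P C ∧ ∀ a ∈ C, ∀ b ∈ P, Communicates μ R a b → Communicates μ R b a

/-- The product partition `β̃ = β × S`. -/
def prodPartition {X : Type*} (S : Type*) (β : Set (Set X)) : Set (Set (X × S)) :=
  {c | ∃ a ∈ β, ∃ i : S, c = a ×ˢ ({i} : Set S)}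

/-- The measure `μ = (m / #S) × counting measure` on `X × S`. -/
noncomputable def fiberMeasure {X : Type*} (S : Type*) [MeasurableSpace X]
    [MeasurableSpace S] [Fintype S] (m : Measure X) : Measure (X × S) :=
  (Fintype.card S : ENNReal)⁻¹ • m.prod Measure.count

/-- The `n`-cylinder `[w 0, …, w (n-1)] = ⋂ j, R^{-j} (w j)`. -/
def cylinder {Y : Type*} (R : Y → Y) {n : ℕ} (w : Fin n → Set Y) : Set Y :=
  ⋂ j : Fin n, (R^[(j : ℕ)]) ⁻¹' w j

/-- The Strong Distortion Property: the Radon–Nikodym derivatives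
`v'_a = d(μ ∘ R^{-n})/dμ` on images of cylinders have a.e. bounded ratio. -/
def StrongDistortion {Y : Type*} [MeasurableSpace Y] (μ : Measure Y) (R : Y → Y)
    (P : Set (Set Y)) : Prop :=
  ∃ D : ENNReal, 1 ≤ D ∧ D ≠ ⊤ ∧
    ∀ n : ℕ, 1 ≤ n → ∀ w : Fin n → Set Y, (∀ j, w j ∈ P) →
      ∀ v : Y → ENNReal, Measurable v →
        (∀ B : Set Y, MeasurableSet B →
          ∫⁻ x in (R^[n] '' cylinder R w) ∩ B, v x ∂μ = μ (cylinder R w ∩ R^[n] ⁻¹' B)) →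
        ∀ᵐ x ∂μ.restrict (R^[n] '' cylinder R w),
          ∀ᵐ y ∂μ.restrict (R^[n] '' cylinder R w), v x / v y ≤ D

/-- The Finite Images property for a Markov map. -/
def FiniteImages {Y : Type*} (R : Y → Y) (P : Set (Set Y)) : Prop :=
  {s : Set Y | ∃ a ∈ P, s = R '' a}.Finite

/-- The partition `P` is irreducible under `R`: all elements intercommunicate. -/
def IrreduciblePartition {Y : Type*} [MeasurableSpace Y] (μ : Measure Y) (R : Y → Y)
    (P : Set (Set Y)) : Prop :=
  ∀ a ∈ P, ∀ b ∈ P, Communicates μ R a b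

/-! If the walk never reached `j` from `i`, it would stay forever in the other state `k`, which
forces `f_k (T^n x) = k` for all large `n`. But `{f_k ≠ k}` has positive measure, so by ergodicity
and Poincaré recurrence almost every orbit visits it infinitely often. -/

namespace Ergodic

variable {α : Type*} [MeasurableSpace α] {μ : Measure α} {T : α → α}

theorem ae_frequently_mem [IsFiniteMeasure μ] (hT : Ergodic T μ) {s : Set α}
    (hs : MeasurableSet s) (hs₀ : μ s ≠ 0) : ∀ᵐ x ∂μ, ∃ᶠ n in atTop, T^[n] x ∈ s := by
  set R := limsup (fun n => T^[n] ⁻¹' s) atTop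
  have hR : MeasurableSet R :=
    MeasurableSet.measurableSet_limsup fun n => hT.measurable.iterate n hs
  have hR_inv : T ⁻¹' R = R := by
    ext x
    simp only [R, mem_preimage, mem_limsup_iff_frequently_mem, ← Function.iterate_succ_apply]
    rw [← frequently_map (P := fun n => T^[n] x ∈ s), map_add_atTop_eq_nat 1]
  have hrec := hT.toMeasurePreserving.conservative.ae_mem_imp_frequently_image_mem
    hs.nullMeasurableSet
  rcases hT.ae_mem_or_ae_notMem hR hR_inv with hR_ae | hR_null
  · filter_upwards [hR_ae] with x hx using mem_limsup_iff_frequently_mem.1 hx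
  · refine absurd (measure_eq_zero_iff_ae_notMem.2 ?_) hs₀
    filter_upwards [hrec, hR_null] with x hx hxR hxs
    exact hxR (mem_limsup_iff_frequently_mem.2 (hx hxs))

end Ergodic

section DeterministicWalk

variable {X S : Type*} (T : X → X) (f : S → X → S)

lemma detSkew_iterate_fst (n : ℕ) (x : X) (i : S) : ((detSkew T f)^[n] (x, i)).1 = T^[n] x := by
  induction n with
  | zero => rfl
  | succ n ih => simp only [Function.iterate_succ_apply', detSkew, ih]

lemma detWalk_succ (i : S) (n : ℕ) (x : X) :
    detWalk T f i (n + 1) x = f (detWalk T f i n x) (T^[n] x) := by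
  simp only [detWalk, Function.iterate_succ_apply', detSkew, detSkew_iterate_fst]

variable {T f}

lemma exists_lt_detWalk_ne {i k : S} {n : ℕ} {x : X} (hk : detWalk T f i n x = k)
    (hleave : ∃ᶠ m in atTop, f k (T^[m] x) ≠ k) : ∃ m > n, detWalk T f i m x ≠ k := by
  by_contra! hstay
  have hstay' : ∀ m ≥ n, detWalk T f i m x = k := fun m hm =>
    hm.eq_or_lt.elim (fun h => h ▸ hk) (hstay m)
  refine hleave ?_
  filter_upwards [eventually_ge_atTop n] with m hm
  have hstep := detWalk_succ T f i m x
  rw [hstay' m hm, hstay' (m + 1) (by omega)] at hstep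
  exact not_not.2 hstep.symm

lemma exists_detWalk_eq_of_frequently_ne {f : Fin 2 → X → Fin 2} {x : X}
    (hleave : ∀ k, ∃ᶠ m in atTop, f k (T^[m] x) ≠ k) (i j : Fin 2) :
    ∃ n, 1 ≤ n ∧ detWalk T f i n x = j := by
  by_cases h₁ : detWalk T f i 1 x = j
  · exact ⟨1, le_rfl, h₁⟩
  obtain ⟨m, hm, hne⟩ := exists_lt_detWalk_ne rfl (hleave (detWalk T f i 1 x))
  exact ⟨m, hm.le, by omega⟩

end DeterministicWalk

theorem stmt_0_general {X : Type*} [MeasurableSpace X] (m : Measure X) [IsProbabilityMeasure m]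
    (T : X → X) (hTerg : Ergodic T m)
    (f : Fin 2 → X → Fin 2) (hf : ∀ i, Measurable (f i))
    (hfix : ∀ i : Fin 2, m {x | f i x = i} < 1) :
    WalkTransitive m T f := by
  have hleave : ∀ᵐ x ∂m, ∀ k, ∃ᶠ n in atTop, f k (T^[n] x) ≠ k := by
    refine ae_all_iff.2 fun k => ?_
    have hfk : MeasurableSet (f k ⁻¹' {k}) := hf k (measurableSet_singleton k)
    refine hTerg.ae_frequently_mem hfk.compl ?_
    rw [Ne, prob_compl_eq_zero_iff hfk]
    exact (hfix k).ne
  intro i j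
  have hvisit : ∀ᵐ x ∂m, ∃ n, 1 ≤ n ∧ detWalk T f i n x = j := by
    filter_upwards [hleave] with x hx using exists_detWalk_eq_of_frequently_ne hx i j
  rw [← measure_univ (μ := m)]
  exact measure_congr (ae_eq_univ.2 (ae_iff.1 hvisit))

/-- A deterministic walk on a two-state space, driven by an ergodic
measure-preserving transformation, with `m {f_i = i} < 1` for each state, is transitive. -/
theorem stmt_0 {X : Type*} [MeasurableSpace X] (m : Measure X) [IsProbabilityMeasure m]
    (T : X → X) (hT : MeasurePreserving T m m) (hTerg : Ergodic T m)
    (f : Fin 2 → X → Fin 2) (hf : ∀ i, Measurable (f i))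
    (hfix : ∀ i : Fin 2, m {x | f i x = i} < 1) :
    WalkTransitive m T f :=
  stmt_0_general m T hTerg f hf hfix
end

section
/- Consider the deterministic walk on S = {0, 1, 2} driven by the doubling map T : [0,1] → [0,1], Tx := 2x mod 1 (with Lebesgue measure), with transition functions f_0(x) = 0 for x ∈ [3/4, 1), 1 for x ∈ [1/4, 3/4), 2 for x ∈ [0, 1/4); f_1(x) = 0 for x ∈ [1/4, 1/2), 1 for x ∈ [0, 1/4) ∪ [3/4, 1], 2 for x ∈ [1/2, 3/4); f_2(x) = 0 for x ∈ [0, 1/4) ∪ [1/2, 3/4), 2 for x ∈ [1/4, 1/2) ∪ [3/4, 1]. Then for every x ∈ [0, 1/2) and every n ≥ 0, U_{1,n}(x) ≠ 2; in particular the deterministic walk is not transitive on S. -/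
open MeasureTheory Set Filter

/-- The doubling map `T x = 2 x mod 1` on `[0, 1]`. -/
noncomputable def doubling : ℝ → ℝ := fun x => Int.fract (2 * x)

open scoped Classical in
/-- The environment `f_0, f_1, f_2` of the counter-example. -/
noncomputable def exEnv : Fin 3 → ℝ → Fin 3 := fun i x =>
  if i = 0 then
    (if 3/4 ≤ x ∧ x < 1 then 0
     else if 1/4 ≤ x ∧ x < 3/4 then 1
     else 2)
  else if i = 1 then
    (if 1/4 ≤ x ∧ x < 1/2 then 0
     else if (0 ≤ x ∧ x < 1/4) ∨ (3/4 ≤ x ∧ x ≤ 1) then 1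
     else 2)
  else
    (if (0 ≤ x ∧ x < 1/4) ∨ (1/2 ≤ x ∧ x < 3/4) then 0
     else 2)

/-!
Started in state `1` at `x < 1/2`, the walk only ever occupies the states `0` and `1`, and it is
in state `1` exactly when `Tⁿ x < 1/2`: on `[0, 1/2)` the function `f_1` is `1` on `[0, 1/4)` and
`0` on `[1/4, 1/2)`, i.e. it reads off whether `T x < 1/2`, and `f_0` does the same on `[1/2, 1)`.
So `[0, 1/2) × {1} ∪ [1/2, 1) × {0}` is invariant under the skew product, state `2` is never
reached from the set `[0, 1/2)` of measure `1/2`, and transitivity fails.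
-/

theorem detWalk_ne_of_mapsTo {X S : Type*} {T : X → X} {f : S → X → S} {I : Set (X × S)}
    (hI : MapsTo (detSkew T f) I I) {j : S} (hj : ∀ p ∈ I, p.2 ≠ j) {i : S} {x : X}
    (hx : (x, i) ∈ I) (n : ℕ) : detWalk T f i n x ≠ j :=
  hj _ (hI.iterate n hx)

theorem not_walkTransitive_of_forall_ne {X S : Type*} [MeasurableSpace X] {m : Measure X}
    [IsProbabilityMeasure m] {T : X → X} {f : S → X → S} {i j : S} {A : Set X}
    (hA : MeasurableSet A) (hA₀ : m A ≠ 0) (hAj : ∀ x ∈ A, ∀ n, detWalk T f i n x ≠ j) :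
    ¬ WalkTransitive m T f := by
  intro h
  have hvisit : {x | ∃ n, 1 ≤ n ∧ detWalk T f i n x = j} ⊆ Aᶜ :=
    fun x ⟨n, _, hn⟩ hx => hAj x hx n hn
  have hle := (measure_mono hvisit).trans_eq (prob_compl_eq_one_sub (μ := m) hA)
  rw [h i j] at hle
  exact (ENNReal.sub_lt_self ENNReal.one_ne_top one_ne_zero hA₀).not_ge hle

theorem doubling_of_lt_half {x : ℝ} (h0 : 0 ≤ x) (h1 : x < 1 / 2) : doubling x = 2 * x :=
  Int.fract_eq_self.2 ⟨by linarith, by linarith⟩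

theorem doubling_of_half_le {x : ℝ} (h0 : 1 / 2 ≤ x) (h1 : x < 1) : doubling x = 2 * x - 1 := by
  rw [doubling, ← Int.fract_sub_one, Int.fract_eq_self]
  constructor <;> linarith

theorem exEnv_one_of_lt_half {x : ℝ} (h0 : 0 ≤ x) (h1 : x < 1 / 2) :
    exEnv 1 x = if x < 1 / 4 then 1 else 0 := by
  simp only [exEnv]
  split_ifs <;> grind

theorem exEnv_zero_of_half_le {x : ℝ} (h0 : 1 / 2 ≤ x) (h1 : x < 1) :
    exEnv 0 x = if x < 3 / 4 then 1 else 0 := by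
  simp only [exEnv]
  split_ifs <;> grind

def exInvariantSet : Set (ℝ × Fin 3) := Ico 0 (1 / 2) ×ˢ {1} ∪ Ico (1 / 2) 1 ×ˢ {0}

theorem mapsTo_detSkew_exInvariantSet :
    MapsTo (detSkew doubling exEnv) exInvariantSet exInvariantSet := by
  rintro ⟨x, i⟩ (⟨⟨hx0, hx1⟩, rfl⟩ | ⟨⟨hx0, hx1⟩, rfl⟩)
  · rw [detSkew, doubling_of_lt_half hx0 hx1, exEnv_one_of_lt_half hx0 hx1]
    split_ifs <;> simp [exInvariantSet] <;> constructor <;> linarith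
  · rw [detSkew, doubling_of_half_le hx0 hx1, exEnv_zero_of_half_le hx0 hx1]
    split_ifs <;> simp [exInvariantSet] <;> constructor <;> linarith

theorem snd_ne_two_of_mem_exInvariantSet {p : ℝ × Fin 3} (hp : p ∈ exInvariantSet) :
    p.2 ≠ 2 := by
  rcases hp with ⟨-, hp⟩ | ⟨-, hp⟩ <;> rw [mem_singleton_iff.1 hp] <;> decide

theorem detWalk_exEnv_one_ne_two {x : ℝ} (hx : x ∈ Ico (0 : ℝ) (1 / 2)) (n : ℕ) :
    detWalk doubling exEnv 1 n x ≠ 2 :=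
  detWalk_ne_of_mapsTo mapsTo_detSkew_exInvariantSet (fun _ => snd_ne_two_of_mem_exInvariantSet)
    (Or.inl ⟨hx, rfl⟩) n

/-- For the walk driven by the doubling map in the environment `exEnv`,
started at state `1` from any `x ∈ [0, 1/2)`, state `2` is never visited; in particular
the walk is not transitive on `{0, 1, 2}`. -/
theorem stmt_11 :
    (∀ x ∈ Set.Ico (0 : ℝ) (1/2), ∀ n : ℕ, detWalk doubling exEnv 1 n x ≠ 2) ∧
      ¬ WalkTransitive (volume.restrict (Set.Icc (0 : ℝ) 1)) doubling exEnv := by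
  refine ⟨fun x hx => detWalk_exEnv_one_ne_two hx, ?_⟩
  have : IsProbabilityMeasure (volume.restrict (Icc (0 : ℝ) 1)) := ⟨by simp⟩
  have hIco : Ico (0 : ℝ) (1 / 2) ⊆ Icc 0 1 :=
    Ico_subset_Icc_self.trans (Icc_subset_Icc_right (by norm_num))
  refine not_walkTransitive_of_forall_ne measurableSet_Ico ?_
    (fun x hx => detWalk_exEnv_one_ne_two hx)
  rw [Measure.restrict_apply measurableSet_Ico, inter_eq_left.2 hIco, Real.volume_Ico]
  norm_num
end
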